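/- Let χ be a primitive Dirichlet character modulo p^n of p-power order, with associated unit c_χ ∈ (ℤ/p^{n₀}ℤ)^×. Then for every ζ ∈ L with ζ^{p^{n−1}} = 1, the Galois-averaged twisted Gauss sum satisfies (1/(|G|·p^n))·Σ_{σ∈G} G₁(χ̄^σ)·G(χ^σ)·σ(ζ) = (1/|G|)·Σ_{σ∈G} σ(ζ). -/

import Mathlib

open Complex

/-- `e x = exp(2πi x)` for a rational number `x`. -/
noncomputable def e (x : ℚ) : ℂ := Complex.exp (2 * Real.pi * Complex.I * x)

/-!
For each `σ`, the character `φ = ι ∘ σ ∘ χ` is even, because `χ` has odd order, and it still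
satisfies `φ(1 + p^{n-n₀} b) = e(bc/p^{n₀})`, because `χ(1 + p^{n-n₀} b)` is a `p^{n₀}`-th root of
unity and is therefore fixed by `Gal(L/K)`. For such `φ` one has `G₁(φ̄) G(φ) = p^n`: the
substitution `y = xt` turns the product into `∑_{x ≡ c} ∑_t φ(t) e(x(1+t)/p^n)`; detecting
`x ≡ c (mod p^{n₀})` by the additive characters `e(j(x - c)/p^{n₀})` and summing over all `x`
forces `t = -1 - p^{n-n₀} j`, and there `φ(t) = e(jc/p^{n₀})` cancels the detecting character.
Hence every summand of the Galois average equals `p^n σ(ζ)`.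
-/

open Finset

lemma e_intCast_div (N : ℕ) [NeZero N] (k : ℤ) :
    e ((k : ℚ) / N) = ZMod.stdAddChar (k : ZMod N) := by
  rw [ZMod.stdAddChar_coe, e]
  push_cast
  ring_nf

lemma e_val_div (N : ℕ) [NeZero N] (x : ZMod N) :
    e ((x.val : ℚ) / N) = ZMod.stdAddChar x := by
  simpa using e_intCast_div N x.val

lemma e_intCast_mul_val_div (M : ℕ) [NeZero M] (b : ℤ) (c : ZMod M) :
    e ((b * c.val : ℚ) / M) = ZMod.stdAddChar ((b : ZMod M) * c) := by
  simpa using e_intCast_div M (b * c.val)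

lemma ZMod.stdAddChar_pow_eq_one (M : ℕ) [NeZero M] (y : ZMod M) :
    ZMod.stdAddChar y ^ M = 1 := by
  rw [← AddChar.map_nsmul_eq_pow, nsmul_eq_mul, ZMod.natCast_self, zero_mul,
    AddChar.map_zero_eq_one]

lemma ZMod.stdAddChar_castHom {M N d : ℕ} [NeZero M] [NeZero N] (hdM : d * M = N)
    (x : ZMod N) :
    ZMod.stdAddChar (ZMod.castHom (Dvd.intro_left d hdM) (ZMod M) x) =
      ZMod.stdAddChar ((d : ZMod N) * x) := by
  rw [← ZMod.intCast_zmod_cast x, map_intCast, ← Int.cast_natCast d, ← Int.cast_mul,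
    ZMod.stdAddChar_coe, ZMod.stdAddChar_coe]
  congr 1
  subst hdM
  have hM : (M : ℂ) ≠ 0 := NeZero.ne _
  have hd : (d : ℂ) ≠ 0 := by rintro h; simp_all
  push_cast
  field_simp

lemma ZMod.isUnit_of_isUnit_castHom {p m n : ℕ} [NeZero (p ^ n)] (hp : p.Prime) (hm : 0 < m)
    (hmn : m ≤ n) {x : ZMod (p ^ n)}
    (hx : IsUnit (ZMod.castHom (pow_dvd_pow p hmn) (ZMod (p ^ m)) x)) : IsUnit x := by
  have : NeZero (p ^ m) := ⟨pow_ne_zero _ hp.ne_zero⟩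
  rw [ZMod.castHom_apply, ZMod.cast_eq_val, ZMod.isUnit_natCast_iff_not_dvd_pow hp hm] at hx
  rwa [← ZMod.natCast_zmod_val x, ZMod.isUnit_natCast_iff_not_dvd_pow hp (hm.trans_le hmn)]

lemma Finset.sum_units_filter_eq {R β : Type*} [Monoid R] [Fintype R] [Fintype Rˣ]
    [AddCommMonoid β] (P : R → Prop) [DecidablePred P] (hP : ∀ x, P x → IsUnit x)
    (f : R → β) :
    ∑ u ∈ univ.filter (fun u : Rˣ => P u), f u = ∑ x ∈ univ.filter P, f x := by
  rw [sum_filter, sum_filter]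
  exact Fintype.sum_of_injective _ Units.val_injective _ _
    (fun x hx => if_neg fun hPx => hx (hP x hPx)) fun _ => rfl

lemma gaussSum_eq_sum_units {R R' : Type*} [CommRing R] [Fintype R] [Fintype Rˣ]
    [CommRing R'] (χ : MulChar R R') (ψ : AddChar R R') :
    gaussSum χ ψ = ∑ u : Rˣ, χ u * ψ u :=
  (Fintype.sum_of_injective _ Units.val_injective _ _
    (fun x hx => by rw [χ.map_nonunit hx, zero_mul]) fun _ => rfl).symm

lemma inv_mul_mul_gaussSum {R R' : Type*} [CommRing R] [Fintype R] [Field R']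
    (χ : MulChar R R') (ψ : AddChar R R') (u : Rˣ) :
    (χ u)⁻¹ * ψ u * gaussSum χ ψ = ∑ t, χ t * ψ (u * (1 + t)) := by
  have hχu : χ u ≠ 0 := (u.isUnit.map χ).ne_zero
  rw [← gaussSum_mulShift χ ψ u, gaussSum, mul_sum, mul_sum]
  refine sum_congr rfl fun t _ => ?_
  rw [AddChar.mulShift_apply, mul_one_add, AddChar.map_add_eq_mul]
  field_simp

lemma AlgEquiv.apply_eq_self_of_pow_eq_one {K L : Type*} [Field K] [Field L] [Algebra K L]
    {μ : K} {M : ℕ} [NeZero M] (hμ : IsPrimitiveRoot μ M) (σ : L ≃ₐ[K] L) {x : L}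
    (hx : x ^ M = 1) : σ x = x := by
  obtain ⟨i, -, rfl⟩ := (hμ.map_of_injective (algebraMap K L).injective).eq_pow_of_pow_eq_one hx
  rw [map_pow, AlgEquiv.commutes]

section Fibre

variable {M N d : ℕ} [NeZero M] [NeZero N] (hdM : d * M = N)
include hdM

lemma ite_castHom_eq_sum_stdAddChar (c : ZMod M) (x : ZMod N) :
    (if ZMod.castHom (Dvd.intro_left d hdM) (ZMod M) x = c then (M : ℂ) else 0) =
      ∑ j : ZMod M,
        ZMod.stdAddChar (-(j * c)) * ZMod.stdAddChar ((d : ZMod N) * (j.val : ZMod N) * x) := by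
  have hsum := AddChar.sum_mulShift
    (ZMod.castHom (Dvd.intro_left d hdM) (ZMod M) x - c) (ZMod.isPrimitive_stdAddChar M)
  simp only [sub_eq_zero, ZMod.card, apply_ite (Nat.cast : ℕ → ℂ), Nat.cast_zero] at hsum
  rw [← hsum]
  refine sum_congr rfl fun j _ => ?_
  have hj : j * ZMod.castHom (Dvd.intro_left d hdM) (ZMod M) x =
      ZMod.castHom (Dvd.intro_left d hdM) (ZMod M) (j.val * x) := by
    rw [map_mul, map_natCast, ZMod.natCast_zmod_val]
  rw [mul_sub, sub_eq_neg_add, AddChar.map_add_eq_mul, hj, ZMod.stdAddChar_castHom hdM, mul_assoc]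

lemma sum_filter_castHom_eq (c : ZMod M) (g : ZMod N → ℂ) :
    ∑ x ∈ univ.filter (fun x => ZMod.castHom (Dvd.intro_left d hdM) (ZMod M) x = c), g x =
      (M : ℂ)⁻¹ * ∑ j : ZMod M, ZMod.stdAddChar (-(j * c)) *
        ∑ x, ZMod.stdAddChar ((d : ZMod N) * (j.val : ZMod N) * x) * g x := by
  have hM : (M : ℂ) ≠ 0 := NeZero.ne _
  have hterm (x : ZMod N) :
      (if ZMod.castHom (Dvd.intro_left d hdM) (ZMod M) x = c then g x else 0) =
        (M : ℂ)⁻¹ * ((∑ j : ZMod M, ZMod.stdAddChar (-(j * c)) *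
          ZMod.stdAddChar ((d : ZMod N) * (j.val : ZMod N) * x)) * g x) := by
    rw [← ite_castHom_eq_sum_stdAddChar hdM, ite_mul, zero_mul, mul_ite, mul_zero,
      inv_mul_cancel_left₀ hM]
  rw [sum_filter, sum_congr rfl fun x _ => hterm x, ← mul_sum]
  simp_rw [sum_mul, mul_sum, mul_assoc]
  rw [sum_comm]

lemma sum_filter_castHom_sum_mulChar_eq (φ : MulChar (ZMod N) ℂ) (c : ZMod M)
    (hneg : φ (-1) = 1)
    (hφ : ∀ b : ℤ, φ (1 + d * b) = ZMod.stdAddChar ((b : ZMod M) * c)) :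
    ∑ x ∈ univ.filter (fun x => ZMod.castHom (Dvd.intro_left d hdM) (ZMod M) x = c),
      ∑ t, φ t * ZMod.stdAddChar (x * (1 + t)) = N := by
  have hM : (M : ℂ) ≠ 0 := NeZero.ne _
  have hinner (j : ZMod M) :
      ∑ x, ZMod.stdAddChar ((d : ZMod N) * (j.val : ZMod N) * x) *
          ∑ t, φ t * ZMod.stdAddChar (x * (1 + t)) =
        φ (-1 - d * j.val) * N := by
    calc _ = ∑ t, φ t * ∑ x, ZMod.stdAddChar (x * (1 + t + (d * j.val : ZMod N))) := by
          simp_rw [mul_sum]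
          rw [sum_comm]
          refine sum_congr rfl fun t _ => sum_congr rfl fun x _ => ?_
          rw [show x * (1 + t + (d * j.val : ZMod N)) = d * j.val * x + x * (1 + t) by ring,
            AddChar.map_add_eq_mul]
          ring
      _ = ∑ t, φ t * if t = -1 - d * j.val then (N : ℂ) else 0 := by
          refine sum_congr rfl fun t _ => ?_
          rw [AddChar.sum_mulShift _ (ZMod.isPrimitive_stdAddChar N), ZMod.card]
          simp only [add_assoc, add_eq_zero_iff_eq_neg', Nat.cast_ite, Nat.cast_zero,
            eq_sub_iff_add_eq]
      _ = φ (-1 - d * j.val) * N := by simp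
  have hval (j : ZMod M) : φ (-1 - d * j.val) = ZMod.stdAddChar (j * c) := by
    rw [show (-1 - d * j.val : ZMod N) = -1 * (1 + d * ((j.val : ℤ) : ZMod N)) by
      push_cast; ring, map_mul, hneg, one_mul, hφ]
    simp
  simp_rw [sum_filter_castHom_eq hdM, hinner, hval, ← mul_assoc, ← AddChar.map_add_eq_mul,
    neg_add_cancel, AddChar.map_zero_eq_one, one_mul, sum_const, card_univ, ZMod.card,
    nsmul_eq_mul, inv_mul_cancel_left₀ hM]

theorem sum_filter_castHom_inv_mul_mul_gaussSum (φ : MulChar (ZMod N) ℂ) (c : ZMod M)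
    (hneg : φ (-1) = 1)
    (hφ : ∀ b : ℤ, φ (1 + d * b) = ZMod.stdAddChar ((b : ZMod M) * c))
    (hunit : ∀ x, ZMod.castHom (Dvd.intro_left d hdM) (ZMod M) x = c → IsUnit x) :
    (∑ u ∈ univ.filter (fun u : (ZMod N)ˣ =>
        ZMod.castHom (Dvd.intro_left d hdM) (ZMod M) (u : ZMod N) = c),
      (φ u)⁻¹ * ZMod.stdAddChar (u : ZMod N)) * gaussSum φ ZMod.stdAddChar = N := by
  rw [sum_mul, ← sum_filter_castHom_sum_mulChar_eq hdM φ c hneg hφ,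
    ← sum_units_filter_eq _ hunit]
  exact sum_congr rfl fun u _ => inv_mul_mul_gaussSum φ _ u

end Fibre

theorem sum_filter_inv_mul_e_mul_sum_mul_e {p n n₀ : ℕ} [hp : Fact p.Prime] (hn₀ : 0 < n₀)
    (hn₀n : n₀ ≤ n) {R : Type*} [CommRing R] (χ : MulChar (ZMod (p ^ n)) R) (f : R →+* ℂ)
    (c : ZMod (p ^ n₀)) (hc : IsUnit c) (hneg : f (χ (-1)) = 1)
    (hφ : ∀ b : ℤ, f (χ (1 + (p : ZMod (p ^ n)) ^ (n - n₀) * b)) =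
      ZMod.stdAddChar ((b : ZMod (p ^ n₀)) * c)) :
    (∑ a ∈ univ.filter (fun a : (ZMod (p ^ n))ˣ =>
        ZMod.castHom (pow_dvd_pow p hn₀n) (ZMod (p ^ n₀)) (a : ZMod (p ^ n)) = c),
      (f (χ a))⁻¹ * e (((a : ZMod (p ^ n)).val : ℚ) / (p ^ n : ℚ))) *
    (∑ a : (ZMod (p ^ n))ˣ, f (χ a) * e (((a : ZMod (p ^ n)).val : ℚ) / (p ^ n : ℚ))) =
      (p : ℂ) ^ n := by
  have : NeZero (p ^ n) := ⟨pow_ne_zero _ hp.out.ne_zero⟩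
  have : NeZero (p ^ n₀) := ⟨pow_ne_zero _ hp.out.ne_zero⟩
  have hdM : p ^ (n - n₀) * p ^ n₀ = p ^ n := by rw [← pow_add, Nat.sub_add_cancel hn₀n]
  have hφ' (b : ℤ) : χ.ringHomComp f (1 + ((p ^ (n - n₀) : ℕ) : ZMod (p ^ n)) * b) =
      ZMod.stdAddChar ((b : ZMod (p ^ n₀)) * c) := by
    rw [MulChar.ringHomComp_apply, ← hφ]
    push_cast
    rfl
  have key := sum_filter_castHom_inv_mul_mul_gaussSum hdM (χ.ringHomComp f) c hneg hφ'
    (fun x hx => ZMod.isUnit_of_isUnit_castHom hp.out hn₀ hn₀n (hx ▸ hc))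
  have he := e_val_div (p ^ n)
  push_cast at he key
  rw [gaussSum_eq_sum_units] at key
  simp only [he]
  exact key

theorem stmt_3_general (p n n₀ : ℕ) [hp : Fact p.Prime] (hodd : Odd p)
    (hn₀ : 0 < n₀) (hn : 2 * n₀ ≤ n)
    (K L : Type*) [Field K] [Field L] [Algebra ℚ K] [Algebra K L]
    [IsCyclotomicExtension {p ^ n₀} ℚ K]
    [FiniteDimensional K L]
    (ι : L →+* ℂ)
    (χ : DirichletCharacter L (p ^ n))
    (hord : ∃ k : ℕ, orderOf χ = p ^ k)
    (c : ZMod (p ^ n₀)) (hc : IsUnit c)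
    (hcχ : ∀ b : ℤ, ι (χ (1 + (p : ZMod (p ^ n)) ^ (n - n₀) * b)) =
      e ((b * c.val : ℚ) / (p ^ n₀ : ℚ)))
    (ζ : L) :
    ((Fintype.card (L ≃ₐ[K] L) * p ^ n : ℕ) : ℂ)⁻¹ *
      ∑ σ : L ≃ₐ[K] L,
        (∑ a ∈ Finset.univ.filter (fun a : (ZMod (p ^ n))ˣ =>
            ZMod.castHom (pow_dvd_pow p (le_trans (Nat.le_mul_of_pos_left n₀ two_pos) hn)) (ZMod (p ^ n₀)) (a : ZMod (p ^ n)) = c),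
          (ι (σ (χ (a : ZMod (p ^ n)))))⁻¹ * e (((a : ZMod (p ^ n)).val : ℚ) / (p ^ n : ℚ))) *
        (∑ a : (ZMod (p ^ n))ˣ,
          ι (σ (χ (a : ZMod (p ^ n)))) * e (((a : ZMod (p ^ n)).val : ℚ) / (p ^ n : ℚ))) *
        ι (σ ζ)
    = ((Fintype.card (L ≃ₐ[K] L) : ℕ) : ℂ)⁻¹ * ∑ σ : L ≃ₐ[K] L, ι (σ ζ) := by
  have hn₀n : n₀ ≤ n := le_trans (Nat.le_mul_of_pos_left n₀ two_pos) hn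
  have : NeZero (p ^ n₀) := ⟨pow_ne_zero _ hp.out.ne_zero⟩
  have hχneg : χ (-1) = 1 := by
    obtain ⟨k, hk⟩ := hord
    exact MulChar.val_neg_one_eq_one_of_odd_order hodd.pow (hk ▸ pow_orderOf_eq_one χ)
  obtain ⟨μ, hμ⟩ := IsCyclotomicExtension.exists_isPrimitiveRoot ℚ K (Set.mem_singleton (p ^ n₀))
    (NeZero.ne _)
  have hcχ' (b : ℤ) : ι (χ (1 + (p : ZMod (p ^ n)) ^ (n - n₀) * b)) =
      ZMod.stdAddChar ((b : ZMod (p ^ n₀)) * c) := by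
    rw [hcχ, ← e_intCast_mul_val_div]
    push_cast
    rfl
  have hfix (σ : L ≃ₐ[K] L) (b : ℤ) :
      σ (χ (1 + (p : ZMod (p ^ n)) ^ (n - n₀) * b)) =
        χ (1 + (p : ZMod (p ^ n)) ^ (n - n₀) * b) := by
    refine σ.apply_eq_self_of_pow_eq_one hμ (ι.injective ?_)
    rw [map_pow, hcχ', ZMod.stdAddChar_pow_eq_one, map_one]
  have hG₁G (σ : L ≃ₐ[K] L) := sum_filter_inv_mul_e_mul_sum_mul_e hn₀ hn₀n χ
    (ι.comp (σ : L →+* L)) c hc (by simp [hχneg]) (fun b => by simp [hfix, hcχ'])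
  simp only [RingHom.comp_apply, RingHom.coe_coe] at hG₁G
  simp_rw [hG₁G, ← mul_sum]
  have hN : (p : ℂ) ^ n ≠ 0 := pow_ne_zero _ (Nat.cast_ne_zero.mpr hp.out.ne_zero)
  push_cast
  rw [mul_inv, mul_assoc, inv_mul_cancel_left₀ hN]

/-- the paper's Lemma 3.4: for a primitive Dirichlet character `χ` modulo `p^n`
of `p`-power order (values in `L = ℚ(ζ_{p^{n−1}})`, embedded in `ℂ` via `ι`), with associated
unit `c ∈ (ℤ/p^{n₀}ℤ)^×`, and `G = Gal(L/K)` with `K = ℚ(ζ_{p^{n₀}})`, one has, for every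
`ζ ∈ L` with `ζ^{p^{n−1}} = 1`:
`(1/(|G| p^n)) Σ_{σ∈G} G₁(χ̄^σ) G(χ^σ) σ(ζ) = (1/|G|) Σ_{σ∈G} σ(ζ)`. -/
theorem stmt_3 (p n n₀ : ℕ) [hp : Fact p.Prime] (hodd : Odd p)
    (hn₀ : 0 < n₀) (hn : 2 * n₀ ≤ n)
    (K L : Type*) [Field K] [Field L] [Algebra ℚ K] [Algebra ℚ L] [Algebra K L]
    [IsScalarTower ℚ K L]
    [IsCyclotomicExtension {p ^ (n - 1)} ℚ L]
    [IsCyclotomicExtension {p ^ n₀} ℚ K]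
    [FiniteDimensional K L]
    (ι : L →+* ℂ)
    (χ : DirichletCharacter L (p ^ n)) (hprim : χ.IsPrimitive)
    (hord : ∃ k : ℕ, orderOf χ = p ^ k)
    (c : ZMod (p ^ n₀)) (hc : IsUnit c)
    (hcχ : ∀ b : ℤ, ι (χ (1 + (p : ZMod (p ^ n)) ^ (n - n₀) * b)) =
      e ((b * c.val : ℚ) / (p ^ n₀ : ℚ)))
    (ζ : L) (hζ : ζ ^ (p ^ (n - 1)) = 1) :
    ((Fintype.card (L ≃ₐ[K] L) * p ^ n : ℕ) : ℂ)⁻¹ *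
      ∑ σ : L ≃ₐ[K] L,
        (∑ a ∈ Finset.univ.filter (fun a : (ZMod (p ^ n))ˣ =>
            ZMod.castHom (pow_dvd_pow p (le_trans (Nat.le_mul_of_pos_left n₀ two_pos) hn)) (ZMod (p ^ n₀)) (a : ZMod (p ^ n)) = c),
          (ι (σ (χ (a : ZMod (p ^ n)))))⁻¹ * e (((a : ZMod (p ^ n)).val : ℚ) / (p ^ n : ℚ))) *
        (∑ a : (ZMod (p ^ n))ˣ,
          ι (σ (χ (a : ZMod (p ^ n)))) * e (((a : ZMod (p ^ n)).val : ℚ) / (p ^ n : ℚ))) *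
        ι (σ ζ)
    = ((Fintype.card (L ≃ₐ[K] L) : ℕ) : ℂ)⁻¹ * ∑ σ : L ≃ₐ[K] L, ι (σ ζ) :=
  stmt_3_general p n n₀ (hp := hp) hodd hn₀ hn K L ι χ hord c hc hcχ ζ
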